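/- Let (X,d) be a complete metric space, K ⊂ X compact, μ ∈ (0,1), and for each n ∈ ℕ let f_n : K → K satisfy d(f_n(x), f_n(y)) ≤ μ·d(x,y) for all x,y ∈ K. Then there exists x* ∈ K such that for every x ∈ K, the sequence f_1 ∘ f_2 ∘ ⋯ ∘ f_n (x) converges to x* as n → ∞. -/

import Mathlib

/-!
The composites `f₁ ∘ ⋯ ∘ fₙ` are `μⁿ`-contractions on `K`, so the orbits of any two points of
`K` merge. The orbit of a single point `x₀` is Cauchy: its `n`-th step is the image under
`f₁ ∘ ⋯ ∘ fₙ` of the two points `x₀` and `fₙ₊₁ x₀` of `K`, hence at most `μⁿ · diam K`.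
Its limit lies in `K` since `K` is compact, and then every orbit converges to it. Unlike the
autonomous case, this limit need not be a fixed point of any `fₙ`.
-/

/-- The non-stationary composition `f₁ ∘ f₂ ∘ ⋯ ∘ fₙ`. -/
def nsComp {X : Type*} (f : ℕ → X → X) : ℕ → X → X
  | 0 => id
  | n + 1 => nsComp f n ∘ f (n + 1)

open Filter Topology

section NonstationaryComposition

variable {X : Type*} {f : ℕ → X → X} {s : Set X}

theorem nsComp_succ_apply (n : ℕ) (x : X) : nsComp f (n + 1) x = nsComp f n (f (n + 1) x) :=
  rfl

theorem mapsTo_nsComp (hmaps : ∀ n, Set.MapsTo (f n) s s) (n : ℕ) :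
    Set.MapsTo (nsComp f n) s s := by
  induction n with
  | zero => exact Set.mapsTo_id s
  | succ n ih => exact ih.comp (hmaps (n + 1))

variable [PseudoMetricSpace X] {μ : ℝ}

theorem dist_nsComp_le (hμ : 0 ≤ μ) (hmaps : ∀ n, Set.MapsTo (f n) s s)
    (hcontr : ∀ n, ∀ x ∈ s, ∀ y ∈ s, dist (f n x) (f n y) ≤ μ * dist x y) (n : ℕ) :
    ∀ x ∈ s, ∀ y ∈ s, dist (nsComp f n x) (nsComp f n y) ≤ μ ^ n * dist x y := by
  induction n with
  | zero => simp [nsComp]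
  | succ n ih =>
    intro x hx y hy
    calc dist (nsComp f (n + 1) x) (nsComp f (n + 1) y)
        ≤ μ ^ n * dist (f (n + 1) x) (f (n + 1) y) :=
          ih _ (hmaps (n + 1) hx) _ (hmaps (n + 1) hy)
      _ ≤ μ ^ n * (μ * dist x y) := by gcongr; exact hcontr (n + 1) x hx y hy
      _ = μ ^ (n + 1) * dist x y := by ring

theorem tendsto_dist_nsComp_nsComp (hμ : μ ∈ Set.Ico (0 : ℝ) 1)
    (hmaps : ∀ n, Set.MapsTo (f n) s s)
    (hcontr : ∀ n, ∀ x ∈ s, ∀ y ∈ s, dist (f n x) (f n y) ≤ μ * dist x y)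
    {x y : X} (hx : x ∈ s) (hy : y ∈ s) :
    Tendsto (fun n => dist (nsComp f n x) (nsComp f n y)) atTop (𝓝 0) := by
  have hpow : Tendsto (fun n => μ ^ n * dist x y) atTop (𝓝 0) := by
    simpa using (tendsto_pow_atTop_nhds_zero_of_lt_one hμ.1 hμ.2).mul_const (dist x y)
  exact squeeze_zero (fun _ => dist_nonneg)
    (fun n => dist_nsComp_le hμ.1 hmaps hcontr n x hx y hy) hpow

theorem cauchySeq_nsComp (hs : Bornology.IsBounded s) (hμ : μ ∈ Set.Ico (0 : ℝ) 1)
    (hmaps : ∀ n, Set.MapsTo (f n) s s)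
    (hcontr : ∀ n, ∀ x ∈ s, ∀ y ∈ s, dist (f n x) (f n y) ≤ μ * dist x y)
    {x : X} (hx : x ∈ s) : CauchySeq (fun n => nsComp f n x) := by
  refine cauchySeq_of_le_geometric μ (Metric.diam s) hμ.2 fun n => ?_
  have hfx : f (n + 1) x ∈ s := hmaps (n + 1) hx
  calc dist (nsComp f n x) (nsComp f (n + 1) x)
      = dist (nsComp f n x) (nsComp f n (f (n + 1) x)) := by rw [nsComp_succ_apply]
    _ ≤ μ ^ n * dist x (f (n + 1) x) := dist_nsComp_le hμ.1 hmaps hcontr n x hx _ hfx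
    _ ≤ μ ^ n * Metric.diam s := by
        gcongr
        · exact pow_nonneg hμ.1 n
        · exact Metric.dist_le_diam_of_mem hs hx hfx
    _ = Metric.diam s * μ ^ n := mul_comm _ _

end NonstationaryComposition

theorem stmt9 {X : Type*} [MetricSpace X]
    {K : Set X} (hK : IsCompact K) (hne : K.Nonempty)
    {μ : ℝ} (hμ : μ ∈ Set.Ioo (0 : ℝ) 1)
    (f : ℕ → X → X) (hmaps : ∀ n, Set.MapsTo (f n) K K)
    (hcontr : ∀ n, ∀ x ∈ K, ∀ y ∈ K, dist (f n x) (f n y) ≤ μ * dist x y) :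
    ∃ xs ∈ K, ∀ x ∈ K,
      Filter.Tendsto (fun n => nsComp f n x) Filter.atTop (nhds xs) := by
  have hμ' : μ ∈ Set.Ico (0 : ℝ) 1 := Set.Ioo_subset_Ico_self hμ
  obtain ⟨x₀, hx₀⟩ := hne
  obtain ⟨xs, hxs, hlim⟩ := cauchySeq_tendsto_of_isComplete hK.isComplete
    (fun n => mapsTo_nsComp hmaps n hx₀) (cauchySeq_nsComp hK.isBounded hμ' hmaps hcontr hx₀)
  exact ⟨xs, hxs, fun x hx =>
    hlim.congr_dist (tendsto_dist_nsComp_nsComp hμ' hmaps hcontr hx₀ hx)⟩
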